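/- Let P₀, P₁ be the orthogonal projections of (ℂ²)^{⊗3} onto V₀ := span{|000⟩,|011⟩,|101⟩,|110⟩} and V₁ := span{|111⟩,|100⟩,|010⟩,|001⟩} respectively, and set M₀ := ĜP₀ and M₁ := ĜF̂P₁. Then M₀†M₀ + M₁†M₁ = I₈, i.e. M₀, M₁ are Kraus operators of a trace-preserving quantum operation (the decoder De₄ is a quantum channel). -/

import Mathlib

/- Common setup: (ℂ²)^{⊗n} is modeled as functions {0,1}ⁿ → ℂ, with computational
basis kets, outer products |u⟩⟨v|, and the partial trace over the i-th tensor factor. -/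

open Matrix
open scoped ComplexConjugate

noncomputable section

/-- The computational basis ket `|s⟩` for a bit string `s ∈ {0,1}ⁿ`. -/
def ket {n : ℕ} (s : Fin n → Fin 2) : (Fin n → Fin 2) → ℂ :=
  fun x => if x = s then 1 else 0

/-- The outer product `|u⟩⟨v|`. -/
def outer {ι : Type*} (u v : ι → ℂ) : Matrix ι ι ℂ :=
  Matrix.of fun i j => u i * conj (v j)

/-- The partial trace over the `i`-th tensor factor (the single deletion error `D_i`);
it satisfies `ptrace i (A₁ ⊗ ⋯ ⊗ Aₙ) = Tr(A_i) • A₁ ⊗ ⋯ ⊗ A_{i-1} ⊗ A_{i+1} ⊗ ⋯ ⊗ Aₙ`. -/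
def ptrace {m : ℕ} (i : Fin (m + 1))
    (A : Matrix (Fin (m + 1) → Fin 2) (Fin (m + 1) → Fin 2) ℂ) :
    Matrix (Fin m → Fin 2) (Fin m → Fin 2) ℂ :=
  Matrix.of fun y y' => ∑ b : Fin 2, A (i.insertNth b y) (i.insertNth b y')

/-- The operator `F̂ = |000⟩⟨111| + |011⟩⟨100| + |101⟩⟨010| + |110⟩⟨001|` (Step 2 of `De₄`). -/
def Fhat : Matrix (Fin 3 → Fin 2) (Fin 3 → Fin 2) ℂ :=
  outer (ket ![0,0,0]) (ket ![1,1,1]) + outer (ket ![0,1,1]) (ket ![1,0,0])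
    + outer (ket ![1,0,1]) (ket ![0,1,0]) + outer (ket ![1,1,0]) (ket ![0,0,1])

/-- `ω = e^{2πi/3}`, a primitive cube root of unity. -/
def omega : ℂ := Complex.exp (2 * (Real.pi : ℂ) * Complex.I / 3)

/-- `|1̄00⟩ = (|011⟩+|101⟩+|110⟩)/√3`. -/
def bar100 : (Fin 3 → Fin 2) → ℂ :=
  ((Real.sqrt 3 : ℂ))⁻¹ • (ket ![0,1,1] + ket ![1,0,1] + ket ![1,1,0])

/-- `|0̄10⟩ = (|011⟩+ω|101⟩+ω²|110⟩)/√3`. -/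
def bar010 : (Fin 3 → Fin 2) → ℂ :=
  ((Real.sqrt 3 : ℂ))⁻¹ • (ket ![0,1,1] + omega • ket ![1,0,1] + omega ^ 2 • ket ![1,1,0])

/-- `|0̄01⟩ = (|011⟩+ω²|101⟩+ω|110⟩)/√3`. -/
def bar001 : (Fin 3 → Fin 2) → ℂ :=
  ((Real.sqrt 3 : ℂ))⁻¹ • (ket ![0,1,1] + omega ^ 2 • ket ![1,0,1] + omega • ket ![1,1,0])

/-- The operator `Ĝ = |000⟩⟨000| + |100⟩⟨1̄00| + |010⟩⟨0̄10| + |011⟩⟨0̄01|` (Step 3 of `De₄`). -/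
def Ghat : Matrix (Fin 3 → Fin 2) (Fin 3 → Fin 2) ℂ :=
  outer (ket ![0,0,0]) (ket ![0,0,0]) + outer (ket ![1,0,0]) bar100
    + outer (ket ![0,1,0]) bar010 + outer (ket ![0,1,1]) bar001

/-- The orthogonal projection `P₀` onto `V₀ = span{|000⟩,|011⟩,|101⟩,|110⟩}`:
since these are orthonormal computational basis vectors, `P₀ = Σ |b⟩⟨b|` over them. -/
def P0 : Matrix (Fin 3 → Fin 2) (Fin 3 → Fin 2) ℂ :=
  outer (ket ![0,0,0]) (ket ![0,0,0]) + outer (ket ![0,1,1]) (ket ![0,1,1])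
    + outer (ket ![1,0,1]) (ket ![1,0,1]) + outer (ket ![1,1,0]) (ket ![1,1,0])

/-- The orthogonal projection `P₁` onto `V₁ = span{|111⟩,|100⟩,|010⟩,|001⟩}`. -/
def P1 : Matrix (Fin 3 → Fin 2) (Fin 3 → Fin 2) ℂ :=
  outer (ket ![1,1,1]) (ket ![1,1,1]) + outer (ket ![1,0,0]) (ket ![1,0,0])
    + outer (ket ![0,1,0]) (ket ![0,1,0]) + outer (ket ![0,0,1]) (ket ![0,0,1])

/-- The Kraus operator `M₀ = Ĝ P₀` of the decoder. -/
def M0 : Matrix (Fin 3 → Fin 2) (Fin 3 → Fin 2) ℂ := Ghat * P0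

/-- The Kraus operator `M₁ = Ĝ F̂ P₁` of the decoder. -/
def M1 : Matrix (Fin 3 → Fin 2) (Fin 3 → Fin 2) ℂ := Ghat * Fhat * P1

/-!
Each of `Ĝ`, `F̂`, `P₀`, `P₁` has the form `∑ₖ |gₖ⟩⟨fₖ|` with an orthonormal family of kets on one
side, and such sums compose by `(∑ₖ |gₖ⟩⟨eₖ|)(∑ₖ |eₖ⟩⟨fₖ|) = ∑ₖ |gₖ⟩⟨fₖ|` when `(eₖ)` is orthonormal.
Hence `Ĝ†Ĝ` is the sum of `|f⟩⟨f|` over `|000⟩, |1̄00⟩, |0̄10⟩, |0̄01⟩`, which is `P₀` because the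
three-point Fourier transform is unitary (`1 + ω + ω² = 0` kills the cross terms); likewise
`F̂†F̂ = P₁` and `P₀F̂ = F̂`. So `M₀†M₀ = P₀Ĝ†ĜP₀ = P₀` and `M₁†M₁ = P₁F̂†P₀F̂P₁ = P₁`, and
`P₀ + P₁ = I` because even- and odd-weight strings partition `{0,1}³`.
-/

lemma IsPrimitiveRoot.conj_eq_sq {ω : ℂ} (hω : IsPrimitiveRoot ω 3) : conj ω = ω ^ 2 := by
  rw [← RCLike.inv_eq_conj (hω.norm'_eq_one (by norm_num))]
  exact inv_eq_of_mul_eq_one_right (by rw [← pow_succ', hω.pow_eq_one])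

section Outer

variable {ι : Type*}

lemma conjTranspose_outer (u v : ι → ℂ) : (outer u v)ᴴ = outer v u := by
  ext i j; simp [outer, mul_comm]

lemma outer_mul_outer [Fintype ι] (a b c d : ι → ℂ) :
    outer a b * outer c d = (star b ⬝ᵥ c) • outer a d := by
  ext i j
  simp only [mul_apply, outer, of_apply, Matrix.smul_apply, dotProduct, Pi.star_apply,
    RCLike.star_def, smul_eq_mul, Finset.sum_mul]
  exact Finset.sum_congr rfl fun _ _ => by ring

lemma sum_outer_mul_sum_outer [Fintype ι] {κ : Type*} [Fintype κ] [DecidableEq κ]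
    {e : κ → ι → ℂ} (he : ∀ k l, star (e k) ⬝ᵥ e l = if k = l then 1 else 0)
    (g f : κ → ι → ℂ) :
    (∑ k, outer (g k) (e k)) * ∑ k, outer (e k) (f k) = ∑ k, outer (g k) (f k) := by
  simp [Finset.sum_mul_sum, outer_mul_outer, he, ite_smul]

lemma outer_fourier_three {ω c : ℂ} (hω : IsPrimitiveRoot ω 3) (hc : c * conj c = 3⁻¹)
    (x y z : ι → ℂ) :
    outer (c • (x + y + z)) (c • (x + y + z))
      + outer (c • (x + ω • y + ω ^ 2 • z)) (c • (x + ω • y + ω ^ 2 • z))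
      + outer (c • (x + ω ^ 2 • y + ω • z)) (c • (x + ω ^ 2 • y + ω • z))
      = outer x x + outer y y + outer z z := by
  have hsum : 1 + ω + ω ^ 2 = 0 := by
    simpa [Finset.sum_range_succ] using hω.geom_sum_eq_zero (by norm_num)
  have hcube : ω ^ 3 = 1 := hω.pow_eq_one
  ext i j
  simp only [outer, of_apply, Pi.add_apply, Pi.smul_apply, smul_eq_mul, Matrix.add_apply,
    map_add, map_mul, map_pow, hω.conj_eq_sq]
  -- the coefficients of the cross terms are `1 + ω + ω²`, `1 + ω² + ω⁴` and `1 + ω⁴ + ω⁵`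
  linear_combination (x i * conj (x j) + y i * conj (y j) + z i * conj (z j)) * 3 * hc
    + c * conj c * ((ω ^ 3 + 2) * (y i * conj (y j) + z i * conj (z j))
      + (ω + ω ^ 2) * (y i * conj (z j) + z i * conj (y j))) * hcube
    + c * conj c * ((1 - ω + ω ^ 2) * (x i * conj (y j) + x i * conj (z j))
      + y i * conj (x j) + z i * conj (x j) + y i * conj (z j) + z i * conj (y j)) * hsum

end Outer

lemma dotProduct_star_ket {n : ℕ} (s t : Fin n → Fin 2) :
    star (ket s) ⬝ᵥ ket t = if s = t then 1 else 0 := by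
  simp [dotProduct, ket, eq_comm]

lemma orthonormal_ket_comp {n : ℕ} {κ : Type*} [DecidableEq κ] {s : κ → Fin n → Fin 2}
    (hs : Function.Injective s) (k l : κ) :
    star (ket (s k)) ⬝ᵥ ket (s l) = if k = l then 1 else 0 := by
  simp only [dotProduct_star_ket, hs.eq_iff]

lemma sum_outer_ket_self (n : ℕ) : ∑ s : Fin n → Fin 2, outer (ket s) (ket s) = 1 := by
  ext i j
  simp [outer, ket, Matrix.sum_apply, Matrix.one_apply]

lemma isPrimitiveRoot_omega : IsPrimitiveRoot omega 3 := by
  simpa [omega] using Complex.isPrimitiveRoot_exp 3 (by norm_num)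

lemma inv_sqrt_three_mul_conj : ((Real.sqrt 3 : ℂ))⁻¹ * conj ((Real.sqrt 3 : ℂ))⁻¹ = 3⁻¹ := by
  rw [map_inv₀, Complex.conj_ofReal, ← mul_inv, ← Complex.ofReal_mul,
    Real.mul_self_sqrt (by norm_num)]
  norm_num

def evenBits : Fin 4 → Fin 3 → Fin 2 := ![![0,0,0], ![0,1,1], ![1,0,1], ![1,1,0]]

def oddBits : Fin 4 → Fin 3 → Fin 2 := ![![1,1,1], ![1,0,0], ![0,1,0], ![0,0,1]]

def ghatBits : Fin 4 → Fin 3 → Fin 2 := ![![0,0,0], ![1,0,0], ![0,1,0], ![0,1,1]]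

def dftBasis : Fin 4 → (Fin 3 → Fin 2) → ℂ := ![ket ![0,0,0], bar100, bar010, bar001]

lemma evenBits_injective : Function.Injective evenBits := by decide
lemma oddBits_injective : Function.Injective oddBits := by decide
lemma ghatBits_injective : Function.Injective ghatBits := by decide

lemma P0_eq_sum : P0 = ∑ k, outer (ket (evenBits k)) (ket (evenBits k)) := by
  rw [Fin.sum_univ_four]; rfl

lemma P1_eq_sum : P1 = ∑ k, outer (ket (oddBits k)) (ket (oddBits k)) := by
  rw [Fin.sum_univ_four]; rfl

lemma Fhat_eq_sum : Fhat = ∑ k, outer (ket (evenBits k)) (ket (oddBits k)) := by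
  rw [Fin.sum_univ_four]; rfl

lemma Ghat_eq_sum : Ghat = ∑ k, outer (ket (ghatBits k)) (dftBasis k) := by
  rw [Fin.sum_univ_four]; rfl

lemma sum_outer_dftBasis : ∑ k, outer (dftBasis k) (dftBasis k) = P0 := by
  calc ∑ k, outer (dftBasis k) (dftBasis k)
      = outer (ket ![0,0,0]) (ket ![0,0,0])
          + (outer bar100 bar100 + outer bar010 bar010 + outer bar001 bar001) := by
        rw [Fin.sum_univ_four, add_assoc, add_assoc, add_assoc]; rfl
    _ = outer (ket ![0,0,0]) (ket ![0,0,0])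
          + (outer (ket ![0,1,1]) (ket ![0,1,1]) + outer (ket ![1,0,1]) (ket ![1,0,1])
            + outer (ket ![1,1,0]) (ket ![1,1,0])) :=
        congrArg _ (outer_fourier_three isPrimitiveRoot_omega inv_sqrt_three_mul_conj _ _ _)
    _ = P0 := by simp only [P0, add_assoc]

lemma Ghat_conjTranspose_mul_self : Ghatᴴ * Ghat = P0 := by
  rw [Ghat_eq_sum, conjTranspose_sum]
  simp only [conjTranspose_outer]
  rw [sum_outer_mul_sum_outer (orthonormal_ket_comp ghatBits_injective), sum_outer_dftBasis]

lemma Fhat_conjTranspose_mul_self : Fhatᴴ * Fhat = P1 := by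
  rw [Fhat_eq_sum, conjTranspose_sum]
  simp only [conjTranspose_outer]
  rw [sum_outer_mul_sum_outer (orthonormal_ket_comp evenBits_injective), P1_eq_sum]

lemma P0_mul_Fhat : P0 * Fhat = Fhat := by
  rw [P0_eq_sum, Fhat_eq_sum, sum_outer_mul_sum_outer (orthonormal_ket_comp evenBits_injective)]

lemma P0_mul_self : P0 * P0 = P0 := by
  conv_lhs => rw [P0_eq_sum]
  rw [sum_outer_mul_sum_outer (orthonormal_ket_comp evenBits_injective), P0_eq_sum]

lemma P1_mul_self : P1 * P1 = P1 := by
  conv_lhs => rw [P1_eq_sum]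
  rw [sum_outer_mul_sum_outer (orthonormal_ket_comp oddBits_injective), P1_eq_sum]

lemma P0_isHermitian : P0.IsHermitian := by
  simp only [IsHermitian, P0_eq_sum, conjTranspose_sum, conjTranspose_outer]

lemma P1_isHermitian : P1.IsHermitian := by
  simp only [IsHermitian, P1_eq_sum, conjTranspose_sum, conjTranspose_outer]

lemma P0_add_P1 : P0 + P1 = 1 := by
  have hbij : Function.Bijective (Sum.elim evenBits oddBits) := by decide
  rw [P0_eq_sum, P1_eq_sum, ← sum_outer_ket_self,
    ← Fintype.sum_bijective _ hbij _ (fun s => outer (ket s) (ket s)) fun _ => rfl,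
    Fintype.sum_sum_type]
  rfl

lemma M0_conjTranspose_mul_self : M0ᴴ * M0 = P0 := by
  rw [M0, conjTranspose_mul, P0_isHermitian.eq, mul_assoc, ← mul_assoc Ghatᴴ,
    Ghat_conjTranspose_mul_self, P0_mul_self, P0_mul_self]

lemma M1_conjTranspose_mul_self : M1ᴴ * M1 = P1 := by
  have hGF : (Ghat * Fhat)ᴴ * (Ghat * Fhat) = P1 := by
    rw [conjTranspose_mul, mul_assoc, ← mul_assoc Ghatᴴ, Ghat_conjTranspose_mul_self,
      P0_mul_Fhat, Fhat_conjTranspose_mul_self]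
  rw [M1, conjTranspose_mul, P1_isHermitian.eq, mul_assoc, ← mul_assoc (Ghat * Fhat)ᴴ, hGF,
    P1_mul_self, P1_mul_self]

/-- `M₀†M₀ + M₁†M₁ = I`, i.e. `M₀, M₁` are Kraus operators of a
trace-preserving quantum operation. -/
theorem decoder_trace_preserving :
    M0ᴴ * M0 + M1ᴴ * M1 = (1 : Matrix (Fin 3 → Fin 2) (Fin 3 → Fin 2) ℂ) := by
  rw [M0_conjTranspose_mul_self, M1_conjTranspose_mul_self, P0_add_P1]

end
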